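/- Let A be a regular n×n max-plus matrix (n ≥ 1) with maximum cycle mean λ = λ(A). The following are equivalent: (a) A is periodic, i.e., for every x0 : Fin n → ℝ the orbit x of A from x0 admits l ≥ 0 and c ≥ 1 with x (j+c) i = λ·c + x j i for all j ≥ l and all i; (b) for every x0 : Fin n → ℝ and every i, (x k i)/k converges to λ as k → ∞, where x is the orbit of A from x0 (the cycle-time vector is (λ, …, λ)); (c) there exists x : Fin n → ℝ such that for all i, max over j : Fin n of (A i j + (x j : WithBot ℝ)) = ((λ + x i : ℝ) : WithBot ℝ) (the eigenspace of A contains a finite eigenvector). -/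

import Mathlib

/-- `A` is regular: every row contains at least one finite entry. -/
def MPRegular {n : ℕ} (A : Matrix (Fin n) (Fin n) (WithBot ℝ)) : Prop :=
  ∀ i : Fin n, ∃ j : Fin n, A i j ≠ ⊥

/-- `μ` is the mean of some circuit of the precedence graph of `A`. -/
def IsCycleMean {n : ℕ} (A : Matrix (Fin n) (Fin n) (WithBot ℝ)) (μ : ℝ) : Prop :=
  ∃ m : ℕ, 1 ≤ m ∧ ∃ p : ℕ → Fin n, ∃ w : ℕ → ℝ,
    p m = p 0 ∧ (∀ t < m, A (p (t + 1)) (p t) = ((w t : ℝ) : WithBot ℝ)) ∧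
    μ = (∑ t ∈ Finset.range m, w t) / m

/-- `lam` is the maximum cycle mean `λ(A)` of `A`. -/
def IsMaxCycleMean {n : ℕ} (A : Matrix (Fin n) (Fin n) (WithBot ℝ)) (lam : ℝ) : Prop :=
  IsCycleMean A lam ∧ ∀ μ : ℝ, IsCycleMean A μ → μ ≤ lam

/-- The orbit of a (regular) max-plus matrix `A` from the initial vector
`x0`: `x 0 = x0` and `x (k+1) i = max_j (A i j + x k j)` (for regular `A`
this maximum is a real number, extracted with `WithBot.unbot' 0`). -/
noncomputable def mpOrbit {n : ℕ} (A : Matrix (Fin n) (Fin n) (WithBot ℝ))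
    (x0 : Fin n → ℝ) : ℕ → Fin n → ℝ
  | 0 => x0
  | k + 1 => fun i =>
      WithBot.unbotD 0 (Finset.univ.sup fun j => A i j + ((mpOrbit A x0 k j : ℝ) : WithBot ℝ))


section AuxProofs
open Finset

namespace MPAux

lemma coe_unbot'_of_ne (x : WithBot ℝ) (h : x ≠ ⊥) : ((x.unbotD 0 : ℝ) : WithBot ℝ) = x := by
  cases x with
  | bot => simp at h
  | coe r => rfl

variable {n : ℕ} (M : Matrix (Fin n) (Fin n) (WithBot ℝ))

lemma sup_exists (hn : 1 ≤ n) (hM : MPRegular M) (x : Fin n → ℝ) (i : Fin n) :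
    ∃ j, M i j ≠ ⊥ ∧ (Finset.univ.sup fun j => M i j + ((x j : ℝ) : WithBot ℝ)) = M i j + x j := by
  have hne : (Finset.univ : Finset (Fin n)).Nonempty := ⟨⟨0, hn⟩, mem_univ _⟩
  obtain ⟨j, -, hj⟩ := Finset.exists_mem_eq_sup Finset.univ hne (fun j => M i j + ((x j : ℝ) : WithBot ℝ))
  obtain ⟨j0, h0⟩ := hM i
  refine ⟨j, ?_, hj⟩
  intro hbot
  have hle : M i j0 + ((x j0 : ℝ) : WithBot ℝ) ≤ M i j + x j := by
    rw [← hj]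
    exact Finset.le_sup (f := fun j => M i j + ((x j : ℝ) : WithBot ℝ)) (mem_univ j0)
  rw [hbot] at hle
  rw [show (⊥ : WithBot ℝ) + ((x j : ℝ) : WithBot ℝ) = ⊥ by simp] at hle
  have : M i j0 + ((x j0 : ℝ) : WithBot ℝ) = ⊥ := le_bot_iff.mp hle
  rw [WithBot.add_eq_bot] at this
  rcases this with h | h
  · exact h0 h
  · exact WithBot.coe_ne_bot h

lemma sup_ne_bot (hn : 1 ≤ n) (hM : MPRegular M) (x : Fin n → ℝ) (i : Fin n) :
    (Finset.univ.sup fun j => M i j + ((x j : ℝ) : WithBot ℝ)) ≠ ⊥ := by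
  obtain ⟨j, hj, he⟩ := sup_exists M hn hM x i
  rw [he]
  simp [WithBot.add_eq_bot, hj]

lemma orbit_succ_coe (hn : 1 ≤ n) (hM : MPRegular M) (x0 : Fin n → ℝ) (k : ℕ) (i : Fin n) :
    ((mpOrbit M x0 (k+1) i : ℝ) : WithBot ℝ)
      = Finset.univ.sup fun j => M i j + ((mpOrbit M x0 k j : ℝ) : WithBot ℝ) := by
  have : mpOrbit M x0 (k+1) i
      = (Finset.univ.sup fun j => M i j + ((mpOrbit M x0 k j : ℝ) : WithBot ℝ)).unbotD 0 := rfl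
  rw [this, coe_unbot'_of_ne _ (sup_ne_bot M hn hM _ i)]

lemma orbit_add (x0 : Fin n → ℝ) (a t : ℕ) :
    mpOrbit M x0 (a + t) = mpOrbit M (mpOrbit M x0 a) t := by
  induction t with
  | zero => rfl
  | succ t ih =>
      show mpOrbit M x0 (a + t + 1) = _
      funext i
      show (Finset.univ.sup fun j => M i j + ((mpOrbit M x0 (a+t) j : ℝ) : WithBot ℝ)).unbotD 0 = _
      rw [ih]; rfl

end MPAux

namespace MPAux2
open MPAux

lemma sup_add_const {ι : Type*} (s : Finset ι) (f : ι → WithBot ℝ) (c : ℝ) :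
    s.sup (fun j => f j + (c : WithBot ℝ)) = s.sup f + (c : WithBot ℝ) := by
  have := Finset.comp_sup_eq_sup_comp (s := s) (f := f) (g := fun x : WithBot ℝ => x + (c:WithBot ℝ))
    (by intro b1 b2; rcases le_total b1 b2 with h | h
        · simp [max_eq_right h, max_eq_right (add_le_add_left h (c:WithBot ℝ))]
        · simp [max_eq_left h, max_eq_left (add_le_add_left h (c:WithBot ℝ))])
    (by simp)
  exact this.symm

lemma const_add_sup {ι : Type*} (s : Finset ι) (f : ι → WithBot ℝ) (a : WithBot ℝ) :
    s.sup (fun j => a + f j) = a + s.sup f := by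
  have := Finset.comp_sup_eq_sup_comp (s := s) (f := f) (g := fun x : WithBot ℝ => a + x)
    (by intro b1 b2; rcases le_total b1 b2 with h | h
        · simp [max_eq_right h, max_eq_right (add_le_add_right h a)]
        · simp [max_eq_left h, max_eq_left (add_le_add_right h a)])
    (by simp)
  exact this.symm

variable {n : ℕ} (M : Matrix (Fin n) (Fin n) (WithBot ℝ))

/-- shifting the initial vector by a constant shifts the orbit. -/
lemma orbit_shift (hn : 1 ≤ n) (hM : MPRegular M) (x0 : Fin n → ℝ) (c : ℝ) (k : ℕ) :
    mpOrbit M (fun i => x0 i + c) k = fun i => mpOrbit M x0 k i + c := by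
  induction k with
  | zero => rfl
  | succ k ih =>
      funext i
      have h1 := orbit_succ_coe M hn hM (fun i => x0 i + c) k i
      rw [ih] at h1
      have h2 := orbit_succ_coe M hn hM x0 k i
      have h3 : (Finset.univ.sup fun j => M i j + ((mpOrbit M x0 k j + c : ℝ) : WithBot ℝ))
          = (Finset.univ.sup fun j => M i j + ((mpOrbit M x0 k j : ℝ) : WithBot ℝ)) + (c : WithBot ℝ) := by
        rw [← sup_add_const]
        congr 1; funext j
        rw [show ((mpOrbit M x0 k j + c : ℝ) : WithBot ℝ) = ((mpOrbit M x0 k j : ℝ) : WithBot ℝ) + (c : WithBot ℝ) from WithBot.coe_add _ _, add_assoc]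
      rw [h3, ← h2, ← WithBot.coe_add] at h1
      exact_mod_cast h1

/-- orbit monotone in initial vector -/
lemma orbit_mono (hn : 1 ≤ n) (hM : MPRegular M) {x0 y0 : Fin n → ℝ} (h : ∀ i, x0 i ≤ y0 i) (k : ℕ) :
    ∀ i, mpOrbit M x0 k i ≤ mpOrbit M y0 k i := by
  induction k with
  | zero => exact h
  | succ k ih =>
      intro i
      have h1 := orbit_succ_coe M hn hM x0 k i
      have h2 := orbit_succ_coe M hn hM y0 k i
      have : ((mpOrbit M x0 (k+1) i : ℝ) : WithBot ℝ) ≤ ((mpOrbit M y0 (k+1) i : ℝ) : WithBot ℝ) := by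
        rw [h1, h2]
        apply Finset.sup_mono_fun
        intro j _
        exact add_le_add_right (by exact_mod_cast ih j) _
      exact_mod_cast this

/-- orbit from an eigenvector -/
lemma orbit_eig (hn : 1 ≤ n) (hM : MPRegular M) (lam : ℝ) (v : Fin n → ℝ)
    (hv : ∀ i, (Finset.univ.sup fun j => M i j + ((v j : ℝ) : WithBot ℝ)) = ((lam + v i : ℝ) : WithBot ℝ))
    (k : ℕ) : ∀ i, mpOrbit M v k i = lam * k + v i := by
  induction k with
  | zero => intro i; simp [mpOrbit]
  | succ k ih =>
      intro i
      have h1 := orbit_succ_coe M hn hM v k i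
      have h3 : (Finset.univ.sup fun j => M i j + ((mpOrbit M v k j : ℝ) : WithBot ℝ))
          = (Finset.univ.sup fun j => M i j + ((v j : ℝ) : WithBot ℝ)) + ((lam * k : ℝ) : WithBot ℝ) := by
        rw [← sup_add_const]
        congr 1; funext j
        rw [ih j, show ((lam * k + v j : ℝ) : WithBot ℝ) = ((v j : ℝ) : WithBot ℝ) + ((lam * k : ℝ) : WithBot ℝ) by rw [← WithBot.coe_add]; norm_cast; ring, add_assoc]
      rw [h3, hv i, ← WithBot.coe_add] at h1
      have h4 : mpOrbit M v (k+1) i = lam + v i + lam * k := by exact_mod_cast h1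
      rw [h4]; push_cast; ring

end MPAux2

namespace MPAux3
open MPAux MPAux2 Filter

lemma tendsto_linear_div (lam c : ℝ) :
    Tendsto (fun k : ℕ => (lam * k + c)/k) atTop (nhds lam) := by
  have h0 : Tendsto (fun k : ℕ => lam + c * (1/(k:ℝ))) atTop (nhds (lam + c * 0)) :=
    tendsto_const_nhds.add (tendsto_const_nhds.mul tendsto_one_div_atTop_nhds_zero_nat)
  rw [mul_zero, add_zero] at h0
  apply h0.congr'
  filter_upwards [eventually_ge_atTop 1] with k hk
  have hk' : (k : ℝ) ≠ 0 := by positivity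
  field_simp

variable {n : ℕ} (M : Matrix (Fin n) (Fin n) (WithBot ℝ))

lemma c_to_b (hn : 1 ≤ n) (hM : MPRegular M) (lam : ℝ) (v : Fin n → ℝ)
    (hv : ∀ i, (Finset.univ.sup fun j => M i j + ((v j : ℝ) : WithBot ℝ)) = ((lam + v i : ℝ) : WithBot ℝ))
    (x0 : Fin n → ℝ) (i : Fin n) :
    Tendsto (fun k : ℕ => mpOrbit M x0 k i / (k : ℝ)) atTop (nhds lam) := by
  have hne : (Finset.univ : Finset (Fin n)).Nonempty := ⟨⟨0, hn⟩, Finset.mem_univ _⟩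
  set m := Finset.univ.inf' hne (fun i => x0 i - v i) with hm
  set Mx := Finset.univ.sup' hne (fun i => x0 i - v i) with hMx
  have hlo : ∀ j, v j + m ≤ x0 j := by
    intro j
    have := Finset.inf'_le (fun i => x0 i - v i) (Finset.mem_univ j)
    rw [← hm] at this; linarith
  have hhi : ∀ j, x0 j ≤ v j + Mx := by
    intro j
    have := Finset.le_sup' (fun i => x0 i - v i) (Finset.mem_univ j)
    rw [← hMx] at this; linarith
  have horblo : ∀ k, mpOrbit M (fun j => v j + m) k i = lam * k + v i + m := by
    intro k
    rw [orbit_shift M hn hM v m k]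
    simp only []
    rw [orbit_eig M hn hM lam v hv k i]
  have horbhi : ∀ k, mpOrbit M (fun j => v j + Mx) k i = lam * k + v i + Mx := by
    intro k
    rw [orbit_shift M hn hM v Mx k]
    simp only []
    rw [orbit_eig M hn hM lam v hv k i]
  have hlow : ∀ k, lam * k + v i + m ≤ mpOrbit M x0 k i := by
    intro k
    rw [← horblo k]
    exact orbit_mono M hn hM hlo k i
  have hhigh : ∀ k, mpOrbit M x0 k i ≤ lam * k + v i + Mx := by
    intro k
    rw [← horbhi k]
    exact orbit_mono M hn hM hhi k i
  have t1 : Tendsto (fun k : ℕ => (lam * k + (v i + m))/k) atTop (nhds lam) := tendsto_linear_div lam _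
  have t2 : Tendsto (fun k : ℕ => (lam * k + (v i + Mx))/k) atTop (nhds lam) := tendsto_linear_div lam _
  apply tendsto_of_tendsto_of_tendsto_of_le_of_le' t1 t2
  · filter_upwards [eventually_ge_atTop 1] with k hk
    have hkpos : (0:ℝ) < (k:ℝ) := by exact_mod_cast hk
    exact (div_le_div_iff_of_pos_right hkpos).mpr (by have := hlow k; linarith)
  · filter_upwards [eventually_ge_atTop 1] with k hk
    have hkpos : (0:ℝ) < (k:ℝ) := by exact_mod_cast hk
    exact (div_le_div_iff_of_pos_right hkpos).mpr (by have := hhigh k; linarith)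

end MPAux3

namespace MPAux4
open MPAux MPAux2

variable {n : ℕ} (M : Matrix (Fin n) (Fin n) (WithBot ℝ))

lemma a_to_c (hn : 1 ≤ n) (hM : MPRegular M) (lam : ℝ) (x0 : Fin n → ℝ) (l c : ℕ) (hc : 1 ≤ c)
    (hper : ∀ i, mpOrbit M x0 (l + c) i = lam * c + mpOrbit M x0 l i) :
    ∃ v : Fin n → ℝ, ∀ i,
      (Finset.univ.sup fun j => M i j + ((v j : ℝ) : WithBot ℝ)) = ((lam + v i : ℝ) : WithBot ℝ) := by
  set x := mpOrbit M x0 with hx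
  have hrc : (Finset.range c).Nonempty := ⟨0, Finset.mem_range.mpr hc⟩
  refine ⟨fun i => (Finset.range c).sup' hrc (fun t => x (l+t) i - lam * t), ?_⟩
  intro i
  set v : Fin n → ℝ := fun i => (Finset.range c).sup' hrc (fun t => x (l+t) i - lam * t) with hv
  have key : (Finset.univ.sup fun j => M i j + ((v j : ℝ) : WithBot ℝ))
      = (Finset.range c).sup (fun t => ((x (l+t+1) i - lam * t : ℝ) : WithBot ℝ)) := by
    have h1 : ∀ j : Fin n, M i j + ((v j : ℝ) : WithBot ℝ)
        = (Finset.range c).sup (fun t => M i j + ((x (l+t) j - lam * t : ℝ) : WithBot ℝ)) := by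
      intro j
      rw [const_add_sup]
      congr 1
      show ((v j : ℝ) : WithBot ℝ) = _
      have : v j = (Finset.range c).sup' hrc (fun t => x (l+t) j - lam * t) := rfl
      rw [this, Finset.coe_sup' hrc]
      rfl
    calc (Finset.univ.sup fun j => M i j + ((v j : ℝ) : WithBot ℝ))
        = Finset.univ.sup (fun j => (Finset.range c).sup (fun t => M i j + ((x (l+t) j - lam * t : ℝ) : WithBot ℝ))) := by
          congr 1; funext j; exact h1 j
      _ = (Finset.range c).sup (fun t => Finset.univ.sup (fun j => M i j + ((x (l+t) j - lam * t : ℝ) : WithBot ℝ))) := by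
          exact Finset.sup_comm _ _ _
      _ = (Finset.range c).sup (fun t => ((x (l+t+1) i - lam * t : ℝ) : WithBot ℝ)) := by
          apply Finset.sup_congr rfl
          intro t _
          have hsplit : ∀ j, ((x (l+t) j - lam * t : ℝ) : WithBot ℝ)
              = ((x (l+t) j : ℝ) : WithBot ℝ) + ((-(lam * t) : ℝ) : WithBot ℝ) := by
            intro j; rw [← WithBot.coe_add]; norm_cast
          calc Finset.univ.sup (fun j => M i j + ((x (l+t) j - lam * t : ℝ) : WithBot ℝ))
              = Finset.univ.sup (fun j => (M i j + ((x (l+t) j : ℝ) : WithBot ℝ)) + ((-(lam * t) : ℝ) : WithBot ℝ)) := by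
                congr 1; funext j; rw [hsplit j, add_assoc]
            _ = Finset.univ.sup (fun j => M i j + ((x (l+t) j : ℝ) : WithBot ℝ)) + ((-(lam * t) : ℝ) : WithBot ℝ) :=
                sup_add_const _ _ _
            _ = ((x (l+t+1) i : ℝ) : WithBot ℝ) + ((-(lam * t) : ℝ) : WithBot ℝ) := by
                rw [← orbit_succ_coe M hn hM x0 (l+t) i]
            _ = ((x (l+t+1) i - lam * t : ℝ) : WithBot ℝ) := by
                rw [← WithBot.coe_add]; norm_cast
  rw [key]
  apply le_antisymm
  · apply Finset.sup_le
    intro t ht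
    rw [Finset.mem_range] at ht
    rw [WithBot.coe_le_coe]
    rcases Nat.lt_or_ge (t+1) c with h | h
    · have : x (l+t+1) i - lam * ((t+1:ℕ):ℝ) ≤ v i :=
        Finset.le_sup' (f := fun t => x (l+t) i - lam * (t:ℝ)) (Finset.mem_range.mpr h)
      push_cast at this ⊢
      linarith
    · have htc : t + 1 = c := by omega
      have h0 : x (l+0) i - lam * ((0:ℕ):ℝ) ≤ v i :=
        Finset.le_sup' (f := fun t => x (l+t) i - lam * (t:ℝ)) (Finset.mem_range.mpr hc)
      have hxe : x (l + c) i = lam * c + x l i := hper i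
      have : x (l+t+1) i = x (l+c) i := by rw [show l+t+1 = l+c by omega]
      rw [this, hxe]
      push_cast at h0 ⊢
      simp at h0
      have : (c : ℝ) = (t : ℝ) + 1 := by exact_mod_cast congrArg (Nat.cast : ℕ → ℝ) htc.symm
      rw [this]
      linarith
  · obtain ⟨t0, ht0, hvt0⟩ := Finset.exists_mem_eq_sup' hrc (fun t => x (l+t) i - lam * t)
    rw [Finset.mem_range] at ht0
    rcases Nat.eq_zero_or_pos t0 with h0 | hpos
    · have hxe : x (l + c) i = lam * c + x l i := hper i
      have hmem : c - 1 ∈ Finset.range c := Finset.mem_range.mpr (by omega)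
      apply le_trans ?_ (Finset.le_sup (f := fun t => ((x (l+t+1) i - lam * t : ℝ) : WithBot ℝ)) hmem)
      rw [WithBot.coe_le_coe]
      have : l + (c-1) + 1 = l + c := by omega
      rw [this, hxe]
      have hc1 : ((c - 1 : ℕ) : ℝ) = (c : ℝ) - 1 := by
        have : (1:ℕ) ≤ c := hc
        push_cast [this]; ring
      have hvi : v i = x (l + t0) i - lam * t0 := hvt0
      rw [hc1, hvi, h0]
      push_cast
      simp
      linarith
    · have hmem : t0 - 1 ∈ Finset.range c := Finset.mem_range.mpr (by omega)
      apply le_trans ?_ (Finset.le_sup (f := fun t => ((x (l+t+1) i - lam * t : ℝ) : WithBot ℝ)) hmem)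
      rw [WithBot.coe_le_coe]
      have h1 : l + (t0-1) + 1 = l + t0 := by omega
      have hvi : v i = x (l + t0) i - lam * t0 := hvt0
      rw [h1, hvi]
      have ht1 : ((t0 - 1 : ℕ) : ℝ) = (t0 : ℝ) - 1 := by
        push_cast [hpos]; ring
      rw [ht1]
      linarith

end MPAux4

namespace MPAux5
open MPAux MPAux2

variable {n : ℕ} (M : Matrix (Fin n) (Fin n) (WithBot ℝ))

/-- every orbit value is realized by a path -/
lemma pathrep (hn : 1 ≤ n) (hM : MPRegular M) (x0 : Fin n → ℝ) :
    ∀ k i, ∃ p : ℕ → Fin n, p k = i ∧ (∀ t < k, M (p (t+1)) (p t) ≠ ⊥) ∧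
      mpOrbit M x0 k i = x0 (p 0) + ∑ t ∈ Finset.range k, (M (p (t+1)) (p t)).unbotD 0 := by
  intro k
  induction k with
  | zero => intro i; exact ⟨fun _ => i, rfl, by omega, by simp [mpOrbit]⟩
  | succ k ih =>
      intro i
      obtain ⟨j0, hj0, hsup⟩ := sup_exists M hn hM (mpOrbit M x0 k) i
      obtain ⟨p, hpk, hpe, hpv⟩ := ih j0
      refine ⟨fun t => if t ≤ k then p t else i, ?_, ?_, ?_⟩
      · simp
      · intro t ht
        rcases Nat.lt_or_ge t k with h | h
        · simpa [Nat.le_of_lt h, Nat.succ_le_of_lt h] using hpe t h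
        · have htk : t = k := by omega
          subst htk
          simpa [hpk] using hj0
      · have hstep : ((mpOrbit M x0 (k+1) i : ℝ) : WithBot ℝ)
            = (((M i j0).unbotD 0 + mpOrbit M x0 k j0 : ℝ) : WithBot ℝ) := by
          rw [orbit_succ_coe M hn hM x0 k i, hsup, WithBot.coe_add,
            coe_unbot'_of_ne _ hj0]
        have hstep' : mpOrbit M x0 (k+1) i = (M i j0).unbotD 0 + mpOrbit M x0 k j0 :=
          by exact_mod_cast hstep
        rw [hstep', hpv, Finset.sum_range_succ]
        have h1 : ∀ t ∈ Finset.range k,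
            (M ((fun t => if t ≤ k then p t else i) (t+1)) ((fun t => if t ≤ k then p t else i) t)).unbotD 0
              = (M (p (t+1)) (p t)).unbotD 0 := by
          intro t ht
          rw [Finset.mem_range] at ht
          simp [Nat.le_of_lt ht, Nat.succ_le_of_lt ht]
        rw [Finset.sum_congr rfl h1]
        simp [hpk]
        ring

end MPAux5

namespace MPAux6
open MPAux MPAux2 MPAux5

variable {n : ℕ}

lemma c_to_a (hn : 1 ≤ n) (A : Matrix (Fin n) (Fin n) (WithBot ℝ)) (hA : MPRegular A)
    (lam : ℝ) (v : Fin n → ℝ)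
    (hv : ∀ i, (Finset.univ.sup fun j => A i j + ((v j : ℝ) : WithBot ℝ)) = ((lam + v i : ℝ) : WithBot ℝ))
    (x0 : Fin n → ℝ) :
    ∃ l c : ℕ, 1 ≤ c ∧ ∀ j : ℕ, l ≤ j → ∀ i : Fin n,
      mpOrbit A x0 (j + c) i = lam * (c : ℝ) + mpOrbit A x0 j i := by
  classical
  have hne : (Finset.univ : Finset (Fin n)).Nonempty := ⟨⟨0, hn⟩, Finset.mem_univ _⟩
  set C : Matrix (Fin n) (Fin n) (WithBot ℝ) :=
    fun i j => A i j + ((v j - lam - v i : ℝ) : WithBot ℝ) with hC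
  set z0 : Fin n → ℝ := fun i => x0 i - v i with hz0
  -- C is regular
  have hCreg : MPRegular C := by
    intro i
    obtain ⟨j0, hj0⟩ := hA i
    exact ⟨j0, by simp [hC, WithBot.add_eq_bot, hj0]⟩
  -- entries of C are ≤ 0
  have hCle : ∀ i j, C i j ≤ (0 : WithBot ℝ) := by
    intro i j
    have h1 : A i j + ((v j : ℝ) : WithBot ℝ) ≤ ((lam + v i : ℝ) : WithBot ℝ) := by
      rw [← hv i]
      exact Finset.le_sup (f := fun j => A i j + ((v j : ℝ) : WithBot ℝ)) (Finset.mem_univ j)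
    have h2 : C i j = (A i j + ((v j : ℝ) : WithBot ℝ)) + ((- lam - v i : ℝ) : WithBot ℝ) := by
      show A i j + _ = _
      rw [add_assoc, ← WithBot.coe_add]
      congr 2
      ring
    rw [h2]
    calc (A i j + ((v j : ℝ) : WithBot ℝ)) + ((- lam - v i : ℝ) : WithBot ℝ)
        ≤ ((lam + v i : ℝ) : WithBot ℝ) + ((- lam - v i : ℝ) : WithBot ℝ) := add_le_add_left h1 _
      _ = (0 : WithBot ℝ) := by rw [← WithBot.coe_add]; norm_cast; ring
  -- each row of C has a zero entry
  have hCrow : ∀ i, ∃ j, C i j = (0 : WithBot ℝ) := by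
    intro i
    obtain ⟨j, -, hj⟩ := Finset.exists_mem_eq_sup Finset.univ hne (fun j => C i j)
    refine ⟨j, ?_⟩
    have hsupC : Finset.univ.sup (fun j => C i j) = (0 : WithBot ℝ) := by
      have h2 : ∀ j, C i j = (A i j + ((v j : ℝ) : WithBot ℝ)) + ((- lam - v i : ℝ) : WithBot ℝ) := by
        intro j
        show A i j + _ = _
        rw [add_assoc, ← WithBot.coe_add]
        congr 2
        ring
      calc Finset.univ.sup (fun j => C i j)
          = Finset.univ.sup (fun j => (A i j + ((v j : ℝ) : WithBot ℝ)) + ((- lam - v i : ℝ) : WithBot ℝ)) := by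
            congr 1; funext j; exact h2 j
        _ = Finset.univ.sup (fun j => A i j + ((v j : ℝ) : WithBot ℝ)) + ((- lam - v i : ℝ) : WithBot ℝ) :=
            sup_add_const _ _ _
        _ = (0 : WithBot ℝ) := by rw [hv i, ← WithBot.coe_add]; norm_cast; try ring
    rw [← hj, hsupC]
  -- conjugation: orbits of A and C are related
  have horc : ∀ k i, mpOrbit A x0 k i = lam * k + v i + mpOrbit C z0 k i := by
    intro k
    induction k with
    | zero => intro i; simp [mpOrbit, hz0]; try ring
    | succ k ih =>
        intro i
        have key : ∀ j : Fin n, A i j + ((mpOrbit A x0 k j : ℝ) : WithBot ℝ)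
            = (C i j + ((mpOrbit C z0 k j : ℝ) : WithBot ℝ)) + ((lam * (k+1) + v i : ℝ) : WithBot ℝ) := by
          intro j
          have hCij : C i j = A i j + ((v j - lam - v i : ℝ) : WithBot ℝ) := rfl
          calc A i j + ((mpOrbit A x0 k j : ℝ) : WithBot ℝ)
              = A i j + ((lam * k + v j + mpOrbit C z0 k j : ℝ) : WithBot ℝ) := by rw [ih j]
            _ = A i j + (((v j - lam - v i : ℝ) : WithBot ℝ) + (((mpOrbit C z0 k j : ℝ) : WithBot ℝ) + ((lam * (k+1) + v i : ℝ) : WithBot ℝ))) := by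
                congr 1
                rw [← WithBot.coe_add, ← WithBot.coe_add]
                congr 1
                push_cast
                ring
            _ = (C i j + ((mpOrbit C z0 k j : ℝ) : WithBot ℝ)) + ((lam * (k+1) + v i : ℝ) : WithBot ℝ) := by
                rw [hCij]
                ac_rfl
        have h1 : ((mpOrbit A x0 (k+1) i : ℝ) : WithBot ℝ)
            = ((mpOrbit C z0 (k+1) i : ℝ) : WithBot ℝ) + ((lam * (k+1) + v i : ℝ) : WithBot ℝ) := by
          rw [orbit_succ_coe A hn hA x0 k i, orbit_succ_coe C hn hCreg z0 k i]
          calc Finset.univ.sup (fun j => A i j + ((mpOrbit A x0 k j : ℝ) : WithBot ℝ))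
              = Finset.univ.sup (fun j => (C i j + ((mpOrbit C z0 k j : ℝ) : WithBot ℝ)) + ((lam * (k+1) + v i : ℝ) : WithBot ℝ)) := by
                congr 1; funext j; exact key j
            _ = Finset.univ.sup (fun j => C i j + ((mpOrbit C z0 k j : ℝ) : WithBot ℝ)) + ((lam * (k+1) + v i : ℝ) : WithBot ℝ) :=
                sup_add_const _ _ _
        rw [← WithBot.coe_add] at h1
        have h2 : mpOrbit A x0 (k+1) i = mpOrbit C z0 (k+1) i + (lam * (k+1) + v i) := by
          exact_mod_cast h1
        rw [h2]
        push_cast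
        ring
  -- bounds on the orbit of C
  set mz : ℝ := Finset.univ.inf' hne z0 with hmz
  set Mz : ℝ := Finset.univ.sup' hne z0 with hMz
  have hbound : ∀ k i, mz ≤ mpOrbit C z0 k i ∧ mpOrbit C z0 k i ≤ Mz := by
    intro k
    induction k with
    | zero =>
        intro i
        exact ⟨Finset.inf'_le _ (Finset.mem_univ i), Finset.le_sup' _ (Finset.mem_univ i)⟩
    | succ k ih =>
        intro i
        constructor
        · obtain ⟨j0, hj0⟩ := hCrow i
          have h1 : ((mz : ℝ) : WithBot ℝ) ≤ ((mpOrbit C z0 (k+1) i : ℝ) : WithBot ℝ) := by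
            rw [orbit_succ_coe C hn hCreg z0 k i]
            refine le_trans ?_ (Finset.le_sup (f := fun j => C i j + ((mpOrbit C z0 k j : ℝ) : WithBot ℝ)) (Finset.mem_univ j0))
            show ((mz : ℝ) : WithBot ℝ) ≤ C i j0 + ((mpOrbit C z0 k j0 : ℝ) : WithBot ℝ)
            rw [hj0, zero_add, WithBot.coe_le_coe]
            exact (ih j0).1
          exact_mod_cast h1
        · have h1 : ((mpOrbit C z0 (k+1) i : ℝ) : WithBot ℝ) ≤ ((Mz : ℝ) : WithBot ℝ) := by
            rw [orbit_succ_coe C hn hCreg z0 k i]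
            apply Finset.sup_le
            intro j _
            calc C i j + ((mpOrbit C z0 k j : ℝ) : WithBot ℝ)
                ≤ 0 + ((Mz : ℝ) : WithBot ℝ) :=
                  add_le_add (hCle i j) (by rw [WithBot.coe_le_coe]; exact (ih j).2)
              _ = ((Mz : ℝ) : WithBot ℝ) := zero_add _
          exact_mod_cast h1
  -- finite representation of orbit values
  set G : Fin n × Fin n → ℝ := fun ab => (C ab.1 ab.2).unbotD 0 with hG
  have hGle : ∀ ab, G ab ≤ 0 := by
    intro ab
    rcases eq_or_ne (C ab.1 ab.2) ⊥ with h | h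
    · simp [hG, h]
    · have := hCle ab.1 ab.2
      rw [← coe_unbot'_of_ne _ h] at this
      exact_mod_cast this
  set NegS : Finset (Fin n × Fin n) := Finset.univ.filter (fun ab => G ab < 0) with hNegS
  set dd : ℝ := (insert (1:ℝ) (NegS.image (fun ab => -G ab))).min' ⟨1, Finset.mem_insert_self _ _⟩ with hdd
  have hddpos : 0 < dd := by
    have hmem := Finset.min'_mem (insert (1:ℝ) (NegS.image (fun ab => -G ab))) ⟨1, Finset.mem_insert_self _ _⟩
    rw [← hdd] at hmem
    rcases Finset.mem_insert.mp hmem with h | h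
    · rw [h]; norm_num
    · obtain ⟨ab, hab, habe⟩ := Finset.mem_image.mp h
      rw [hNegS, Finset.mem_filter] at hab
      rw [← habe]
      linarith [hab.2]
  have hddle : ∀ ab, G ab < 0 → dd ≤ -G ab := by
    intro ab h
    apply Finset.min'_le
    exact Finset.mem_insert_of_mem (Finset.mem_image_of_mem _ (by rw [hNegS, Finset.mem_filter]; exact ⟨Finset.mem_univ _, h⟩))
  set N : ℕ := ⌈(Mz - mz)/dd⌉₊ with hN
  -- representation claim
  have hrep : ∀ k i, ∃ (j : Fin n) (f : Fin n × Fin n → Fin (N+1)),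
      mpOrbit C z0 k i = z0 j + ∑ ab ∈ Finset.univ, ((f ab : ℕ) : ℝ) * G ab := by
    intro k i
    obtain ⟨p, hpk, hpe, hpv⟩ := pathrep C hn hCreg z0 k i
    set e : ℕ → Fin n × Fin n := fun t => (p (t+1), p t) with he
    have hsum0 : mpOrbit C z0 k i = z0 (p 0) + ∑ t ∈ Finset.range k, G (e t) := hpv
    -- convert the path sum to fiber counts
    have hcomp : ∑ t ∈ Finset.range k, G (e t)
        = ∑ ab ∈ (Finset.range k).image e, (((Finset.range k).filter (fun t => e t = ab)).card : ℝ) * G ab := by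
      rw [Finset.sum_comp]
      simp [nsmul_eq_mul]
    have hext : ∑ ab ∈ (Finset.range k).image e, (((Finset.range k).filter (fun t => e t = ab)).card : ℝ) * G ab
        = ∑ ab ∈ Finset.univ, (((Finset.range k).filter (fun t => e t = ab)).card : ℝ) * G ab := by
      apply Finset.sum_subset (Finset.subset_univ _)
      intro ab _ hab
      have : (Finset.range k).filter (fun t => e t = ab) = ∅ := by
        apply Finset.filter_eq_empty_iff.mpr
        intro t ht hte
        exact hab (hte ▸ Finset.mem_image_of_mem e ht)
      rw [this]
      simp
    set f0 : Fin n × Fin n → ℕ := fun ab => if G ab < 0 then ((Finset.range k).filter (fun t => e t = ab)).card else 0 with hf0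
    have hsame : ∑ ab ∈ Finset.univ, (((Finset.range k).filter (fun t => e t = ab)).card : ℝ) * G ab
        = ∑ ab ∈ Finset.univ, ((f0 ab : ℕ) : ℝ) * G ab := by
      apply Finset.sum_congr rfl
      intro ab _
      rcases lt_or_ge (G ab) 0 with h | h
      · simp [hf0, h]
      · have hg0 : G ab = 0 := le_antisymm (hGle ab) h
        rw [hg0]
        ring
    have htotal : mpOrbit C z0 k i = z0 (p 0) + ∑ ab ∈ Finset.univ, ((f0 ab : ℕ) : ℝ) * G ab := by
      rw [hsum0, hcomp, hext, hsame]
    -- each term is nonpositive, total bounded below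
    have hterm : ∀ ab ∈ Finset.univ, ((f0 ab : ℕ) : ℝ) * G ab ≤ 0 := by
      intro ab _
      apply mul_nonpos_of_nonneg_of_nonpos (by positivity) (hGle ab)
    have htot_lb : mz - Mz ≤ ∑ ab ∈ Finset.univ, ((f0 ab : ℕ) : ℝ) * G ab := by
      have h1 := (hbound k i).1
      have h2 : z0 (p 0) ≤ Mz := Finset.le_sup' _ (Finset.mem_univ (p 0))
      rw [htotal] at h1
      linarith
    have hfb : ∀ ab, f0 ab ≤ N := by
      intro ab
      rcases lt_or_ge (G ab) 0 with h | h
      swap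
      · simp [hf0, not_lt.mpr h]
      · have hsingle : mz - Mz ≤ ((f0 ab : ℕ) : ℝ) * G ab := by
          have h1 : ∀ x ∈ (Finset.univ : Finset (Fin n × Fin n)), 0 ≤ -(((f0 x : ℕ) : ℝ) * G x) :=
            fun x _ => neg_nonneg.mpr (hterm x (Finset.mem_univ x))
          have h2 := Finset.single_le_sum h1 (Finset.mem_univ ab)
          rw [Finset.sum_neg_distrib] at h2
          linarith
        have hfd : (f0 ab : ℝ) * dd ≤ Mz - mz := by
          have h1 : (f0 ab : ℝ) * dd ≤ (f0 ab : ℝ) * (-G ab) :=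
            mul_le_mul_of_nonneg_left (hddle ab h) (Nat.cast_nonneg _)
          rw [mul_neg] at h1
          linarith
        have : (f0 ab : ℝ) ≤ (Mz - mz)/dd := by
          rw [le_div_iff₀ hddpos]
          exact hfd
        have h2 : (f0 ab : ℝ) ≤ (N : ℝ) := le_trans this (by
          rw [hN]
          exact Nat.le_ceil _)
        exact_mod_cast h2
    exact ⟨p 0, fun ab => ⟨f0 ab, Nat.lt_succ_of_le (hfb ab)⟩, htotal⟩
  -- pigeonhole
  set Φ : (Fin n → Fin n × (Fin n × Fin n → Fin (N+1))) → (Fin n → ℝ) :=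
    fun F i => z0 (F i).1 + ∑ ab ∈ Finset.univ, (((F i).2 ab : ℕ) : ℝ) * G ab with hΦ
  have hmem : ∀ k, mpOrbit C z0 k ∈ Set.range Φ := by
    intro k
    have : ∀ i, ∃ q : Fin n × (Fin n × Fin n → Fin (N+1)),
        mpOrbit C z0 k i = z0 q.1 + ∑ ab ∈ Finset.univ, ((q.2 ab : ℕ) : ℝ) * G ab := by
      intro i
      obtain ⟨j, f, hf⟩ := hrep k i
      exact ⟨(j, f), hf⟩
    choose F hF using this
    exact ⟨F, by funext i; exact (hF i).symm⟩
  have hfin : (Set.range Φ).Finite := Set.finite_range Φ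
  have : ∃ k1 k2 : ℕ, k1 ≠ k2 ∧ mpOrbit C z0 k1 = mpOrbit C z0 k2 := by
    haveI := hfin.to_subtype
    obtain ⟨k1, k2, hne12, heq⟩ := Finite.exists_ne_map_eq_of_infinite
      (fun k : ℕ => (⟨mpOrbit C z0 k, hmem k⟩ : ↥(Set.range Φ)))
    exact ⟨k1, k2, hne12, by simpa [Subtype.ext_iff] using heq⟩
  obtain ⟨k1, k2, hne12, heq⟩ := this
  -- wlog k1 < k2
  obtain ⟨a, b, hab, heqab⟩ : ∃ a b : ℕ, a < b ∧ mpOrbit C z0 a = mpOrbit C z0 b := by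
    rcases lt_or_gt_of_ne hne12 with h | h
    · exact ⟨k1, k2, h, heq⟩
    · exact ⟨k2, k1, h, heq.symm⟩
  refine ⟨a, b - a, by omega, ?_⟩
  intro j hj i
  have hper : mpOrbit C z0 (j + (b - a)) = mpOrbit C z0 j := by
    have h2 : mpOrbit C z0 (j + (b - a)) = mpOrbit C (mpOrbit C z0 b) (j - a) := by
      rw [show j + (b-a) = b + (j-a) by omega]
      exact orbit_add C z0 b (j - a)
    have h3 : mpOrbit C z0 j = mpOrbit C (mpOrbit C z0 a) (j - a) := by
      conv_lhs => rw [show j = a + (j - a) by omega]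
      exact orbit_add C z0 a (j - a)
    rw [h2, h3, heqab]
  have e1 := horc (j + (b - a)) i
  have e2 := horc j i
  rw [hper] at e1
  rw [e1, e2]
  push_cast
  ring

end MPAux6

namespace MPAux7
open MPAux MPAux2 MPAux5

variable {n : ℕ}

noncomputable def gA (A : Matrix (Fin n) (Fin n) (WithBot ℝ)) : Fin n → Fin n → ℝ :=
  fun a b => (A a b).unbotD 0

def realP (A : Matrix (Fin n) (Fin n) (WithBot ℝ)) (p : ℕ → Fin n) (m : ℕ) : Prop :=
  ∀ t < m, A (p (t+1)) (p t) ≠ ⊥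

def Reach (A : Matrix (Fin n) (Fin n) (WithBot ℝ)) (j i : Fin n) : Prop :=
  ∃ m p, p 0 = j ∧ p m = i ∧ realP A p m

def Crit (A : Matrix (Fin n) (Fin n) (WithBot ℝ)) (lam : ℝ) (j : Fin n) : Prop :=
  ∃ m, 1 ≤ m ∧ ∃ p : ℕ → Fin n, p 0 = j ∧ p m = j ∧ realP A p m ∧
    ∑ t ∈ Finset.range m, gA A (p (t+1)) (p t) = lam * m

lemma reach_refl (A : Matrix (Fin n) (Fin n) (WithBot ℝ)) (i : Fin n) : Reach A i i :=
  ⟨0, fun _ => i, rfl, rfl, fun t ht => absurd ht (by omega)⟩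

lemma reach_trans {A : Matrix (Fin n) (Fin n) (WithBot ℝ)} {j i i0 : Fin n}
    (h1 : Reach A j i) (h2 : Reach A i i0) : Reach A j i0 := by
  obtain ⟨m1, p1, hp10, hp1m, hp1r⟩ := h1
  obtain ⟨m2, p2, hp20, hp2m, hp2r⟩ := h2
  refine ⟨m1 + m2, fun t => if t < m1 then p1 t else p2 (t - m1), ?_, ?_, ?_⟩
  · show (if 0 < m1 then p1 0 else p2 (0 - m1)) = j
    by_cases h : 0 < m1
    · simp [h, hp10]
    · have hm0 : m1 = 0 := by omega
      simp only [if_neg h, Nat.zero_sub]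
      rw [hp20, ← hp1m, hm0, hp10]
  · have : ¬ (m1 + m2 < m1) := by omega
    simp [this, hp2m]
  · intro t ht
    rcases Nat.lt_or_ge t m1 with h | h
    · have hval : (if t + 1 < m1 then p1 (t+1) else p2 (t + 1 - m1)) = p1 (t+1) := by
        rcases Nat.lt_or_ge (t+1) m1 with h' | h'
        · simp [h']
        · have h'' : t + 1 = m1 := by omega
          have h3 : ¬ (t+1 < m1) := by omega
          simp only [if_neg h3, show t+1-m1 = 0 by omega]
          rw [h'']
          exact hp20.trans hp1m.symm
      simp only [h, if_pos h, hval]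
      exact hp1r t h
    · have h1' : ¬ (t < m1) := by omega
      have h2' : ¬ (t + 1 < m1) := by omega
      simp only [if_neg h1', if_neg h2']
      have : t + 1 - m1 = (t - m1) + 1 := by omega
      rw [this]
      exact hp2r (t - m1) (by omega)

lemma cycle_bound {A : Matrix (Fin n) (Fin n) (WithBot ℝ)} {lam : ℝ}
    (hlam2 : ∀ μ : ℝ, IsCycleMean A μ → μ ≤ lam) :
    ∀ m (p : ℕ → Fin n), 1 ≤ m → p m = p 0 → realP A p m →
      ∑ t ∈ Finset.range m, gA A (p (t+1)) (p t) ≤ lam * m := by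
  intro m p hm hcyc hreal
  set w : ℕ → ℝ := fun t => gA A (p (t+1)) (p t) with hw
  have hedge : ∀ t < m, A (p (t+1)) (p t) = ((w t : ℝ) : WithBot ℝ) := by
    intro t ht
    exact (coe_unbot'_of_ne _ (hreal t ht)).symm
  have hcm : IsCycleMean A ((∑ t ∈ Finset.range m, w t) / m) :=
    ⟨m, hm, p, w, hcyc, hedge, rfl⟩
  have := hlam2 _ hcm
  rw [div_le_iff₀ (by positivity : (0:ℝ) < (m:ℝ))] at this
  linarith [this]

lemma exists_cycle_reach (hn : 1 ≤ n) {A : Matrix (Fin n) (Fin n) (WithBot ℝ)}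
    (hA : MPRegular A) (i0 : Fin n) :
    ∃ (d : ℕ) (q : ℕ → Fin n), 1 ≤ d ∧ d ≤ n ∧ q d = q 0 ∧ realP A q d ∧ Reach A (q 0) i0 := by
  classical
  set r : ℕ → Fin n := fun t => Nat.rec i0 (fun _ prev => Classical.choose (hA prev)) t with hr
  have hredge : ∀ t, A (r t) (r (t+1)) ≠ ⊥ := by
    intro t
    exact Classical.choose_spec (hA (r t))
  obtain ⟨x, y, hxy, hfeq⟩ := Fintype.exists_ne_map_eq_of_card_lt
    (fun s : Fin (n+1) => r (s : ℕ)) (by simp)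
  obtain ⟨a, b, hab, habe⟩ : ∃ a b : ℕ, a < b ∧ b ≤ n ∧ r a = r b := by
    rcases lt_or_gt_of_ne hxy with h | h
    · exact ⟨x, y, ⟨h, by omega, hfeq⟩⟩
    · exact ⟨y, x, ⟨h, by omega, hfeq.symm⟩⟩
  obtain ⟨hbn, hrab⟩ := habe
  have hback : ∀ c (t : ℕ), t < c → A (r (c - (t+1))) (r (c - t)) ≠ ⊥ := by
    intro c t ht
    have h1 : c - t = (c - (t+1)) + 1 := by omega
    rw [h1]
    exact hredge (c - (t+1))
  refine ⟨b - a, fun t => r (b - t), by omega, by omega, ?_, ?_, ?_⟩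
  · show r (b - (b - a)) = r (b - 0)
    have h1 : b - (b - a) = a := by omega
    have h2 : b - 0 = b := by omega
    rw [h1, h2]
    exact hrab
  · intro t ht
    exact hback b t (by omega)
  · refine ⟨b, fun t => r (b - t), rfl, ?_, ?_⟩
    · show r (b - b) = i0
      have : b - b = 0 := by omega
      rw [this]
      rfl
    · intro t ht
      exact hback b t ht

/-- generic splice: removing a cycle `[a, a+d)` from a sum of `m` edge weights -/
lemma splice_sum {M : Type*} [AddCommMonoid M] (w : ℕ → M) (a d m : ℕ)
    (had : a + d ≤ m) :
    ∑ t ∈ Finset.range m, w t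
      = (∑ t ∈ Finset.range (m - d), (if t < a then w t else w (t + d)))
        + ∑ t ∈ Finset.range d, w (a + t) := by
  have h1 : ∑ t ∈ Finset.range m, w t
      = ∑ t ∈ Finset.range a, w t + (∑ t ∈ Finset.Ico a (a+d), w t + ∑ t ∈ Finset.Ico (a+d) m, w t) := by
    rw [Finset.sum_Ico_consecutive _ (by omega : a ≤ a + d) (by omega : a + d ≤ m)]
    rw [Finset.range_eq_Ico, Finset.range_eq_Ico, Finset.sum_Ico_consecutive _ (by omega : 0 ≤ a) (by omega : a ≤ m)]
  have h2 : ∑ t ∈ Finset.Ico a (a+d), w t = ∑ t ∈ Finset.range d, w (a + t) := by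
    rw [Finset.sum_Ico_eq_sum_range]
    simp
  have h3 : ∑ t ∈ Finset.range (m - d), (if t < a then w t else w (t + d))
      = ∑ t ∈ Finset.range a, w t + ∑ t ∈ Finset.Ico (a+d) m, w t := by
    rw [Finset.range_eq_Ico, ← Finset.sum_Ico_consecutive _ (by omega : 0 ≤ a) (by omega : a ≤ m - d)]
    congr 1
    · rw [← Finset.range_eq_Ico]
      apply Finset.sum_congr rfl
      intro t ht
      rw [Finset.mem_range] at ht
      simp [ht]
    · rw [Finset.sum_Ico_eq_sum_range, Finset.sum_Ico_eq_sum_range]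
      have hlen : m - d - a = m - (a + d) := by omega
      rw [hlen]
      apply Finset.sum_congr rfl
      intro t ht
      rw [Finset.mem_range] at ht
      have h4 : ¬ (a + t < a) := by omega
      simp only [if_neg h4]
      congr 1
      omega
  rw [h1, h3, h2]
  abel

end MPAux7

namespace MPAux8
open MPAux MPAux2 MPAux5 MPAux7 Filter

variable {n : ℕ}

noncomputable def extP (f : Fin (n+1) → Fin n) : ℕ → Fin n :=
  fun t => f ⟨min t n, by omega⟩

lemma extP_eq (f : Fin (n+1) → Fin n) (t : ℕ) (ht : t ≤ n) :
    extP f t = f ⟨t, by omega⟩ := by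
  unfold extP
  congr 1
  ext
  simp
  omega

lemma path_bound {A : Matrix (Fin n) (Fin n) (WithBot ℝ)} (i0 : Fin n) (μ K : ℝ)
    (hK0 : 0 ≤ K) (hK : ∀ a b : Fin n, gA A a b ≤ K)
    (hcyc : ∀ (d : ℕ) (q : ℕ → Fin n), 1 ≤ d → d ≤ n → q d = q 0 → realP A q d →
      Reach A (q 0) i0 → ∑ t ∈ Finset.range d, gA A (q (t+1)) (q t) ≤ μ * d) :
    ∀ (m : ℕ) (p : ℕ → Fin n), realP A p m → Reach A (p m) i0 →
      ∑ t ∈ Finset.range m, gA A (p (t+1)) (p t) ≤ μ * m + (n:ℝ) * (K + |μ|) := by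
  intro m
  induction m using Nat.strong_induction_on with
  | _ m ih =>
  intro p hreal hrch
  rcases le_or_gt m n with hm | hm
  · have hsum : ∑ t ∈ Finset.range m, gA A (p (t+1)) (p t) ≤ (m:ℝ) * K := by
      calc ∑ t ∈ Finset.range m, gA A (p (t+1)) (p t)
          ≤ ∑ _t ∈ Finset.range m, K := Finset.sum_le_sum (fun t _ => hK _ _)
        _ = (m:ℝ) * K := by rw [Finset.sum_const, Finset.card_range, nsmul_eq_mul]
    have h1 : (m:ℝ) ≤ (n:ℝ) := by exact_mod_cast hm
    have hm0 : (0:ℝ) ≤ (m:ℝ) := by positivity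
    have e1 : (m:ℝ)*K ≤ (n:ℝ)*K := mul_le_mul_of_nonneg_right h1 hK0
    have e2 : -|μ| * (m:ℝ) ≤ μ * m := mul_le_mul_of_nonneg_right (neg_abs_le μ) hm0
    have e3 : |μ| * (m:ℝ) ≤ |μ| * n := mul_le_mul_of_nonneg_left h1 (abs_nonneg μ)
    nlinarith
  · -- m > n : find a repeated vertex among p 0, …, p n
    obtain ⟨x, y, hxy, hfeq⟩ := Fintype.exists_ne_map_eq_of_card_lt
      (fun s : Fin (n+1) => p (s : ℕ)) (by simp)
    obtain ⟨a, b, hab, hbn, hpab⟩ : ∃ a b : ℕ, a < b ∧ b ≤ n ∧ p a = p b := by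
      rcases lt_or_gt_of_ne hxy with h | h
      · exact ⟨x, y, ⟨h, by omega, hfeq⟩⟩
      · exact ⟨y, x, ⟨h, by omega, hfeq.symm⟩⟩
    set d : ℕ := b - a with hd
    have hd1 : 1 ≤ d := by omega
    have hadm : a + d ≤ m := by omega
    set w : ℕ → ℝ := fun t => gA A (p (t+1)) (p t) with hw
    set p' : ℕ → Fin n := fun t => if t < a then p t else p (t + d) with hp'
    have hvala : ∀ t, t ≤ a → p' t = p t := by
      intro t ht
      rcases Nat.lt_or_ge t a with h | h
      · simp [hp', h]
      · have hta : t = a := by omega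
        have : ¬ (t < a) := by omega
        simp only [hp', if_neg this]
        rw [hta, show a + d = b by omega, ← hpab]
    have hedge' : ∀ t, gA A (p' (t+1)) (p' t) = (if t < a then w t else w (t + d)) := by
      intro t
      rcases Nat.lt_or_ge t a with h | h
      · have h1 : p' t = p t := hvala t (by omega)
        have h2 : p' (t+1) = p (t+1) := hvala (t+1) (by omega)
        simp only [if_pos h, h1, h2, hw]
      · have h0 : ¬ (t < a) := by omega
        have h1 : p' t = p (t + d) := by simp [hp', h0]
        have h2 : p' (t+1) = p (t + d + 1) := by
          have : ¬ (t + 1 < a) := by omega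
          simp only [hp', if_neg this]
          congr 1
          omega
        simp only [if_neg h0, h1, h2, hw]
    have hedgeb' : ∀ t, t < m - d → A (p' (t+1)) (p' t) ≠ ⊥ := by
      intro t ht
      rcases Nat.lt_or_ge t a with h | h
      · have h1 : p' t = p t := hvala t (by omega)
        have h2 : p' (t+1) = p (t+1) := hvala (t+1) (by omega)
        rw [h1, h2]
        exact hreal t (by omega)
      · have h0 : ¬ (t < a) := by omega
        have h1 : p' t = p (t + d) := by simp [hp', h0]
        have h2 : p' (t+1) = p (t + d + 1) := by
          have : ¬ (t + 1 < a) := by omega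
          simp only [hp', if_neg this]
          congr 1
          omega
        rw [h1, h2]
        exact hreal (t + d) (by omega)
    have hp'end : p' (m - d) = p m := by
      have h0 : ¬ (m - d < a) := by omega
      simp only [hp', if_neg h0]
      congr 1
      omega
    have hih : ∑ t ∈ Finset.range (m - d), gA A (p' (t+1)) (p' t) ≤ μ * (m - d : ℕ) + (n:ℝ) * (K + |μ|) := by
      apply ih (m - d) (by omega) p' hedgeb'
      rw [hp'end]
      exact hrch
    have hcycsum : ∑ t ∈ Finset.range d, w (a + t) ≤ μ * d := by
      have hq := hcyc d (fun t => p (a + t)) hd1 (by omega) (by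
          show p (a + d) = p (a + 0)
          rw [show a + d = b by omega, show a + 0 = a by omega]
          exact hpab.symm) (by
          intro t ht
          show A (p (a + (t+1))) (p (a + t)) ≠ ⊥
          rw [show a + (t+1) = (a+t)+1 by omega]
          exact hreal (a+t) (by omega)) (by
          show Reach A (p (a + 0)) i0
          rw [show a + 0 = a by omega]
          apply reach_trans ?_ hrch
          refine ⟨m - a, fun t => p (a + t), rfl, ?_, ?_⟩
          · show p (a + (m - a)) = p m
            rw [show a + (m - a) = m by omega]
          intro t ht
          show A (p (a + (t+1))) (p (a + t)) ≠ ⊥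
          rw [show a + (t+1) = (a+t)+1 by omega]
          exact hreal (a+t) (by omega))
      calc ∑ t ∈ Finset.range d, w (a + t)
          = ∑ t ∈ Finset.range d, gA A (p ((a+t)+1)) (p (a+t)) := rfl
        _ = ∑ t ∈ Finset.range d, gA A ((fun t => p (a+t)) (t+1)) ((fun t => p (a+t)) t) := by
            apply Finset.sum_congr rfl
            intro t _
            congr 2
        _ ≤ μ * d := hq
    have hsplit := splice_sum w a d m hadm
    have heq : ∑ t ∈ Finset.range (m - d), (if t < a then w t else w (t + d))
        = ∑ t ∈ Finset.range (m - d), gA A (p' (t+1)) (p' t) := by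
      apply Finset.sum_congr rfl
      intro t _
      exact (hedge' t).symm
    have hcast : ((m - d : ℕ) : ℝ) = (m:ℝ) - (d:ℝ) := by
      have : d ≤ m := by omega
      push_cast [this]
      ring
    rw [hsplit, heq]
    rw [hcast] at hih
    have hdm : (d:ℝ) ≥ 0 := by positivity
    calc ∑ t ∈ Finset.range (m - d), gA A (p' (t+1)) (p' t) + ∑ t ∈ Finset.range d, w (a+t)
        ≤ (μ * ((m:ℝ) - d) + (n:ℝ) * (K + |μ|)) + μ * d := add_le_add hih hcycsum
      _ = μ * m + (n:ℝ) * (K + |μ|) := by ring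

end MPAux8

namespace MPAux9
open MPAux MPAux2 MPAux5 MPAux7 MPAux8 Filter

variable {n : ℕ}

lemma crit_reach (hn : 1 ≤ n) (A : Matrix (Fin n) (Fin n) (WithBot ℝ)) (hA : MPRegular A)
    (lam : ℝ) (hlam : IsMaxCycleMean A lam)
    (hb : ∀ (x0 : Fin n → ℝ) (i : Fin n),
      Tendsto (fun k : ℕ => mpOrbit A x0 k i / (k : ℝ)) atTop (nhds lam))
    (i0 : Fin n) : ∃ j, Crit A lam j ∧ Reach A j i0 := by
  classical
  by_contra hcon
  push_neg at hcon
  -- the finite set of feasible short cycles whose start reaches i0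
  set Feas : Finset (Fin n × (Fin (n+1) → Fin n)) :=
    Finset.univ.filter (fun q => extP q.2 ((q.1:ℕ)+1) = extP q.2 0
      ∧ realP A (extP q.2) ((q.1:ℕ)+1) ∧ Reach A (extP q.2 0) i0) with hFeas
  -- the encoding of a short cycle is feasible
  have hencode : ∀ (d : ℕ) (q : ℕ → Fin n), 1 ≤ d → d ≤ n → q d = q 0 → realP A q d →
      Reach A (q 0) i0 → ∃ Q ∈ Feas, ((Q.1:ℕ)+1) = d ∧ ∀ t ≤ d, extP Q.2 t = q t := by
    intro d q hd1 hdn hcyc hrealq hrchq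
    set f : Fin (n+1) → Fin n := fun s => q (min (s:ℕ) d) with hf
    have hxt : ∀ t, extP f t = q (min t d) := by
      intro t
      unfold extP
      show q (min (min t n) d) = q (min t d)
      congr 1
      omega
    have hxt' : ∀ t ≤ d, extP f t = q t := by
      intro t ht
      rw [hxt t]
      congr 1
      omega
    refine ⟨(⟨d - 1, by omega⟩, f), ?_, by simp; omega, hxt'⟩
    rw [hFeas, Finset.mem_filter]
    have hdd : ((⟨d - 1, by omega⟩ : Fin n) : ℕ) + 1 = d := by simp; omega
    refine ⟨Finset.mem_univ _, ?_, ?_, ?_⟩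
    · rw [hdd, hxt' d (le_refl d), hxt' 0 (by omega), hcyc]
    · rw [hdd]
      intro t ht
      rw [hxt' (t+1) (by omega), hxt' t (by omega)]
      exact hrealq t ht
    · rw [hxt' 0 (by omega)]
      exact hrchq
  -- Feas is nonempty
  obtain ⟨d0, q0, hd01, hd0n, hq0c, hq0r, hq0rch⟩ := exists_cycle_reach hn hA i0
  obtain ⟨Q0, hQ0, -, -⟩ := hencode d0 q0 hd01 hd0n hq0c hq0r hq0rch
  have hFne : Feas.Nonempty := ⟨Q0, hQ0⟩
  -- the maximal mean of feasible cycles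
  set μ : ℝ := Feas.sup' hFne (fun q =>
    (∑ t ∈ Finset.range ((q.1:ℕ)+1), gA A (extP q.2 (t+1)) (extP q.2 t)) / ((q.1:ℕ)+1)) with hμ
  -- every feasible cycle has mean < lam
  have hmean : ∀ Q ∈ Feas,
      (∑ t ∈ Finset.range ((Q.1:ℕ)+1), gA A (extP Q.2 (t+1)) (extP Q.2 t)) / ((Q.1:ℕ)+1) < lam := by
    intro Q hQ
    rw [hFeas, Finset.mem_filter] at hQ
    obtain ⟨-, hQc, hQr, hQrch⟩ := hQ
    set mm : ℕ := (Q.1:ℕ)+1 with hmm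
    set w : ℕ → ℝ := fun t => gA A (extP Q.2 (t+1)) (extP Q.2 t) with hwq
    have hedge : ∀ t < mm, A (extP Q.2 (t+1)) (extP Q.2 t) = ((w t : ℝ) : WithBot ℝ) :=
      fun t ht => (coe_unbot'_of_ne _ (hQr t ht)).symm
    have hicm : IsCycleMean A ((∑ t ∈ Finset.range mm, w t) / mm) :=
      ⟨mm, by omega, extP Q.2, w, hQc, hedge, rfl⟩
    have hle := hlam.2 _ hicm
    rcases lt_or_eq_of_le hle with h | h
    · have hc : ((mm:ℕ):ℝ) = ((Q.1:ℕ):ℝ) + 1 := by rw [hmm]; push_cast; ring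
      rw [← hc]
      exact h
    · exfalso
      apply hcon (extP Q.2 0) ?_ hQrch
      refine ⟨mm, by omega, extP Q.2, rfl, hQc, hQr, ?_⟩
      have hmm0 : (0:ℝ) < (mm:ℝ) := by positivity
      field_simp at h
      linarith [h]
  have hμlam : μ < lam := by
    rw [hμ, Finset.sup'_lt_iff]
    exact hmean
  -- every short cycle reaching i0 has mean at most μ
  have hcycμ : ∀ (d : ℕ) (q : ℕ → Fin n), 1 ≤ d → d ≤ n → q d = q 0 → realP A q d →
      Reach A (q 0) i0 → ∑ t ∈ Finset.range d, gA A (q (t+1)) (q t) ≤ μ * d := by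
    intro d q hd1 hdn hcyc hrealq hrchq
    obtain ⟨Q, hQF, hQd, hQx⟩ := hencode d q hd1 hdn hcyc hrealq hrchq
    have hsum : ∑ t ∈ Finset.range ((Q.1:ℕ)+1), gA A (extP Q.2 (t+1)) (extP Q.2 t)
        = ∑ t ∈ Finset.range d, gA A (q (t+1)) (q t) := by
      rw [hQd]
      apply Finset.sum_congr rfl
      intro t ht
      rw [Finset.mem_range] at ht
      rw [hQx (t+1) (by omega), hQx t (by omega)]
    have hle := Finset.le_sup' (f := fun q : Fin n × (Fin (n+1) → Fin n) =>
      (∑ t ∈ Finset.range ((q.1:ℕ)+1), gA A (extP q.2 (t+1)) (extP q.2 t)) / ((q.1:ℕ)+1)) hQF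
    rw [← hμ] at hle
    have hc : ((Q.1:ℕ):ℝ) + 1 = (d:ℝ) := by exact_mod_cast hQd
    rw [hsum, hc] at hle
    have hd0 : (0:ℝ) < (d:ℝ) := by positivity
    rw [div_le_iff₀ hd0] at hle
    exact hle
  -- bound on entries
  have hPne : (Finset.univ : Finset (Fin n × Fin n)).Nonempty := ⟨(⟨0,hn⟩,⟨0,hn⟩), Finset.mem_univ _⟩
  set K : ℝ := Finset.univ.sup' hPne (fun ab : Fin n × Fin n => |gA A ab.1 ab.2|) with hKdef
  have hK : ∀ a b : Fin n, gA A a b ≤ K := by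
    intro a b
    calc gA A a b ≤ |gA A a b| := le_abs_self _
      _ ≤ K := Finset.le_sup' (f := fun ab : Fin n × Fin n => |gA A ab.1 ab.2|) (Finset.mem_univ (a,b))
  have hK0 : 0 ≤ K := le_trans (abs_nonneg _)
    (Finset.le_sup' (f := fun ab : Fin n × Fin n => |gA A ab.1 ab.2|) (Finset.mem_univ ((⟨0,hn⟩,⟨0,hn⟩) : Fin n × Fin n)))
  -- orbit values from 0 are bounded by μ k + C
  have horb : ∀ k : ℕ, mpOrbit A (fun _ => 0) k i0 ≤ μ * k + (n:ℝ) * (K + |μ|) := by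
    intro k
    obtain ⟨p, hpk, hpe, hpv⟩ := pathrep A hn hA (fun _ => 0) k i0
    have := path_bound i0 μ K hK0 hK hcycμ k p hpe (by rw [hpk]; exact reach_refl A i0)
    rw [hpv]
    simpa [gA] using this
  -- contradiction with the cycle-time limit
  have ht1 := hb (fun _ => 0) i0
  have ht2 : Tendsto (fun k : ℕ => (μ * k + (n:ℝ) * (K + |μ|))/k) atTop (nhds μ) :=
    MPAux3.tendsto_linear_div μ _
  have hle : lam ≤ μ := by
    apply le_of_tendsto_of_tendsto ht1 ht2
    filter_upwards [eventually_ge_atTop 1] with k hk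
    have hkpos : (0:ℝ) < (k:ℝ) := by exact_mod_cast hk
    exact (div_le_div_iff_of_pos_right hkpos).mpr (horb k)
  linarith

end MPAux9

namespace MPAux10
open MPAux MPAux2 MPAux5 MPAux7 MPAux8 Filter

variable {n : ℕ}

/-- weight of a path in the normalized matrix `A - lam` -/
noncomputable def WW (A : Matrix (Fin n) (Fin n) (WithBot ℝ)) (lam : ℝ)
    (p : ℕ → Fin n) (m : ℕ) : WithBot ℝ :=
  ∑ t ∈ Finset.range m, (A (p (t+1)) (p t) + ((-lam : ℝ) : WithBot ℝ))

open Classical in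
noncomputable def pv (A : Matrix (Fin n) (Fin n) (WithBot ℝ)) (lam : ℝ) (i : Fin n)
    (q : Fin (n+1) × (Fin (n+1) → Fin n)) : WithBot ℝ :=
  if extP q.2 (q.1 : ℕ) = i ∧ Crit A lam (extP q.2 0) then WW A lam (extP q.2) (q.1 : ℕ) else ⊥

noncomputable def vv (A : Matrix (Fin n) (Fin n) (WithBot ℝ)) (lam : ℝ) (i : Fin n) : WithBot ℝ :=
  Finset.univ.sup (fun q => pv A lam i q)

lemma sum_eq_bot {ι : Type*} {s : Finset ι} {f : ι → WithBot ℝ} {t0 : ι}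
    (h0 : t0 ∈ s) (hb : f t0 = ⊥) : ∑ t ∈ s, f t = ⊥ := by
  classical
  rw [← Finset.add_sum_erase s f h0, hb]
  simp

lemma realWW {A : Matrix (Fin n) (Fin n) (WithBot ℝ)} {lam : ℝ} {p : ℕ → Fin n} {m : ℕ}
    (hreal : realP A p m) :
    WW A lam p m = ((∑ t ∈ Finset.range m, gA A (p (t+1)) (p t) - lam * m : ℝ) : WithBot ℝ) := by
  unfold WW
  have h1 : ∀ t ∈ Finset.range m, A (p (t+1)) (p t) + ((-lam:ℝ):WithBot ℝ)
      = ((gA A (p (t+1)) (p t) - lam : ℝ) : WithBot ℝ) := by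
    intro t ht
    rw [Finset.mem_range] at ht
    rw [← coe_unbot'_of_ne _ (hreal t ht), ← WithBot.coe_add]
    rfl
  rw [Finset.sum_congr rfl h1]
  rw [show ((∑ t ∈ Finset.range m, gA A (p (t+1)) (p t) - lam * m : ℝ) : WithBot ℝ)
    = ((∑ t ∈ Finset.range m, (gA A (p (t+1)) (p t) - lam) : ℝ) : WithBot ℝ) by
      congr 1
      rw [Finset.sum_sub_distrib, Finset.sum_const, Finset.card_range, nsmul_eq_mul]
      ring]
  push_cast
  rfl

lemma WW_le_vv {A : Matrix (Fin n) (Fin n) (WithBot ℝ)} {lam : ℝ}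
    (hlam2 : ∀ μ : ℝ, IsCycleMean A μ → μ ≤ lam) :
    ∀ (m : ℕ) (p : ℕ → Fin n), Crit A lam (p 0) → WW A lam p m ≤ vv A lam (p m) := by
  intro m
  induction m using Nat.strong_induction_on with
  | _ m ih =>
  intro p hcrit
  rcases le_or_gt m n with hm | hm
  · -- short path: it is one of the encoded paths
    set f : Fin (n+1) → Fin n := fun s => p (min (s:ℕ) n) with hf
    have hxt : ∀ t, t ≤ n → extP f t = p t := by
      intro t ht
      unfold extP
      show p (min (min t n) n) = p t
      congr 1
      omega
    have hcond : extP f ((⟨m, by omega⟩ : Fin (n+1)) : ℕ) = p m ∧ Crit A lam (extP f 0) := by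
      constructor
      · exact hxt m hm
      · rw [hxt 0 (by omega)]
        exact hcrit
    have hWWeq : WW A lam (extP f) m = WW A lam p m := by
      unfold WW
      apply Finset.sum_congr rfl
      intro t ht
      rw [Finset.mem_range] at ht
      rw [hxt (t+1) (by omega), hxt t (by omega)]
    have hple : pv A lam (p m) (⟨m, by omega⟩, f) = WW A lam p m := by
      unfold pv
      rw [if_pos hcond]
      exact hWWeq
    rw [← hple]
    exact Finset.le_sup (f := fun q => pv A lam (p m) q) (Finset.mem_univ _)
  · -- long path: splice out a cycle
    obtain ⟨x, y, hxy, hfeq⟩ := Fintype.exists_ne_map_eq_of_card_lt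
      (fun s : Fin (n+1) => p (s : ℕ)) (by simp)
    obtain ⟨a, b, hab, hbn, hpab⟩ : ∃ a b : ℕ, a < b ∧ b ≤ n ∧ p a = p b := by
      rcases lt_or_gt_of_ne hxy with h | h
      · exact ⟨x, y, ⟨h, by omega, hfeq⟩⟩
      · exact ⟨y, x, ⟨h, by omega, hfeq.symm⟩⟩
    set d : ℕ := b - a with hd
    have hd1 : 1 ≤ d := by omega
    have hadm : a + d ≤ m := by omega
    set w : ℕ → WithBot ℝ := fun t => A (p (t+1)) (p t) + ((-lam : ℝ) : WithBot ℝ) with hw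
    set p' : ℕ → Fin n := fun t => if t < a then p t else p (t + d) with hp'
    have hvala : ∀ t, t ≤ a → p' t = p t := by
      intro t ht
      rcases Nat.lt_or_ge t a with h | h
      · simp [hp', h]
      · have hta : t = a := by omega
        have : ¬ (t < a) := by omega
        simp only [hp', if_neg this]
        rw [hta, show a + d = b by omega, ← hpab]
    have hedge' : ∀ t, (A (p' (t+1)) (p' t) + ((-lam : ℝ) : WithBot ℝ))
        = (if t < a then w t else w (t + d)) := by
      intro t
      rcases Nat.lt_or_ge t a with h | h
      · have h1 : p' t = p t := hvala t (by omega)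
        have h2 : p' (t+1) = p (t+1) := hvala (t+1) (by omega)
        simp only [if_pos h, h1, h2, hw]
      · have h0 : ¬ (t < a) := by omega
        have h1 : p' t = p (t + d) := by simp [hp', h0]
        have h2 : p' (t+1) = p (t + d + 1) := by
          have : ¬ (t + 1 < a) := by omega
          simp only [hp', if_neg this]
          congr 1
          omega
        simp only [if_neg h0, h1, h2, hw]
    have hsplit := splice_sum w a d m hadm
    have hWWsplit : WW A lam p m = WW A lam p' (m - d) + ∑ t ∈ Finset.range d, w (a + t) := by
      unfold WW
      rw [show (∑ t ∈ Finset.range m, (A (p (t+1)) (p t) + ((-lam : ℝ) : WithBot ℝ))) = ∑ t ∈ Finset.range m, w t from rfl]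
      rw [hsplit]
      congr 1
      apply Finset.sum_congr rfl
      intro t _
      exact (hedge' t).symm
    have hcycle : ∑ t ∈ Finset.range d, w (a + t) ≤ 0 := by
      by_cases hr : realP A (fun t => p (a + t)) d
      · have hrw : ∑ t ∈ Finset.range d, w (a + t) = WW A lam (fun t => p (a + t)) d := by
          unfold WW
          apply Finset.sum_congr rfl
          intro t _
          rfl
        rw [hrw, realWW hr]
        have hsb := cycle_bound hlam2 d (fun t => p (a + t)) hd1 (by
            show p (a + d) = p (a + 0)
            rw [show a + d = b by omega, show a + 0 = a by omega]
            exact hpab.symm) hr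
        rw [show (0 : WithBot ℝ) = ((0:ℝ) : WithBot ℝ) from rfl, WithBot.coe_le_coe]
        have : ∑ t ∈ Finset.range d, gA A ((fun t => p (a+t)) (t+1)) ((fun t => p (a+t)) t)
            = ∑ t ∈ Finset.range d, gA A (p (a+t+1)) (p (a+t)) := rfl
        rw [this] at hsb
        linarith [hsb]
      · unfold realP at hr
        push_neg at hr
        obtain ⟨t0, ht0, hbot⟩ := hr
        apply le_of_eq_of_le (sum_eq_bot (Finset.mem_range.mpr ht0) ?_) bot_le
        show A (p (a + (t0+1))) (p (a + t0)) + ((-lam:ℝ):WithBot ℝ) = ⊥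
        have : A ((fun t => p (a+t)) (t0+1)) ((fun t => p (a+t)) t0) = ⊥ := hbot
        rw [show a + (t0+1) = (a+t0)+1 by omega]
        rw [show A (p ((a+t0)+1)) (p (a+t0)) = ⊥ from this]
        simp
    have hp'end : p' (m - d) = p m := by
      have h0 : ¬ (m - d < a) := by omega
      simp only [hp', if_neg h0]
      congr 1
      omega
    have hih : WW A lam p' (m - d) ≤ vv A lam (p m) := by
      rw [← hp'end]
      apply ih (m - d) (by omega) p'
      rw [hvala 0 (by omega)]
      exact hcrit
    calc WW A lam p m = WW A lam p' (m - d) + ∑ t ∈ Finset.range d, w (a + t) := hWWsplit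
      _ ≤ WW A lam p' (m - d) + 0 := add_le_add_right hcycle _
      _ = WW A lam p' (m - d) := add_zero _
      _ ≤ vv A lam (p m) := hih

end MPAux10

namespace MPAux11
open MPAux MPAux2 MPAux5 MPAux7 MPAux8 MPAux10 Filter

variable {n : ℕ}

lemma coe_neg_add_coe (lam : ℝ) : ((-lam:ℝ):WithBot ℝ) + ((lam:ℝ):WithBot ℝ) = 0 := by
  rw [← WithBot.coe_add, show -lam + lam = (0:ℝ) by ring, WithBot.coe_zero]

lemma L2 {A : Matrix (Fin n) (Fin n) (WithBot ℝ)} {lam : ℝ}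
    (hlam2 : ∀ μ : ℝ, IsCycleMean A μ → μ ≤ lam) (i : Fin n) :
    (Finset.univ.sup fun j => A i j + vv A lam j) ≤ ((lam:ℝ):WithBot ℝ) + vv A lam i := by
  apply Finset.sup_le
  intro j _
  have h1 : A i j + vv A lam j = Finset.univ.sup (fun q => A i j + pv A lam j q) := by
    rw [const_add_sup]
    rfl
  rw [h1]
  apply Finset.sup_le
  intro q _
  by_cases hq : extP q.2 (q.1 : ℕ) = j ∧ Crit A lam (extP q.2 0)
  · have hpv : pv A lam j q = WW A lam (extP q.2) (q.1 : ℕ) := by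
      unfold pv
      rw [if_pos hq]
    set mm : ℕ := (q.1 : ℕ) with hmm
    set r : ℕ → Fin n := fun t => if t ≤ mm then extP q.2 t else i with hr
    have hrval : ∀ t, t ≤ mm → r t = extP q.2 t := fun t ht => by simp [hr, ht]
    have hrtop : r (mm + 1) = i := by simp [hr]
    have hWWr : WW A lam r (mm + 1) = WW A lam (extP q.2) mm + (A i j + ((-lam:ℝ):WithBot ℝ)) := by
      unfold WW
      rw [Finset.sum_range_succ]
      congr 1
      · apply Finset.sum_congr rfl
        intro t ht
        rw [Finset.mem_range] at ht
        rw [hrval (t+1) (by omega), hrval t (by omega)]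
      · rw [hrtop, hrval mm (le_refl mm), hq.1]
  
    have hL1 : WW A lam r (mm + 1) ≤ vv A lam i := by
      rw [← hrtop]
      apply WW_le_vv hlam2
      rw [hrval 0 (by omega)]
      exact hq.2
    rw [hWWr] at hL1
    have h2 := add_le_add_left hL1 ((lam:ℝ):WithBot ℝ)
    have h3 : (WW A lam (extP q.2) mm + (A i j + ((-lam:ℝ):WithBot ℝ))) + ((lam:ℝ):WithBot ℝ)
        = A i j + WW A lam (extP q.2) mm := by
      calc (WW A lam (extP q.2) mm + (A i j + ((-lam:ℝ):WithBot ℝ))) + ((lam:ℝ):WithBot ℝ)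
          = A i j + (WW A lam (extP q.2) mm + (((-lam:ℝ):WithBot ℝ) + ((lam:ℝ):WithBot ℝ))) := by ac_rfl
        _ = A i j + (WW A lam (extP q.2) mm + 0) := by rw [coe_neg_add_coe]
        _ = A i j + WW A lam (extP q.2) mm := by rw [add_zero]
    rw [h3] at h2
    rw [hpv]
    calc A i j + WW A lam (extP q.2) mm ≤ vv A lam i + ((lam:ℝ):WithBot ℝ) := h2
      _ = ((lam:ℝ):WithBot ℝ) + vv A lam i := add_comm _ _
  · have hpv : pv A lam j q = ⊥ := by
      unfold pv
      rw [if_neg hq]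
    rw [hpv]
    simp

lemma L3 {A : Matrix (Fin n) (Fin n) (WithBot ℝ)} {lam : ℝ}
    (hlam2 : ∀ μ : ℝ, IsCycleMean A μ → μ ≤ lam) (i : Fin n)
    (hne : vv A lam i ≠ ⊥) :
    ((lam:ℝ):WithBot ℝ) + vv A lam i ≤ (Finset.univ.sup fun j => A i j + vv A lam j) := by
  classical
  have hPne : (Finset.univ : Finset (Fin (n+1) × (Fin (n+1) → Fin n))).Nonempty :=
    ⟨(0, fun _ => extP (fun _ => (⟨0, by
      -- n ≥ 1 is not directly available; derive from the existence of i : Fin n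
      exact lt_of_le_of_lt (Nat.zero_le _) i.isLt⟩ : Fin n)) 0), Finset.mem_univ _⟩
  obtain ⟨q0, -, hq0⟩ := Finset.exists_mem_eq_sup Finset.univ hPne (fun q => pv A lam i q)
  have hvv : vv A lam i = pv A lam i q0 := hq0
  have hcond : extP q0.2 (q0.1 : ℕ) = i ∧ Crit A lam (extP q0.2 0) := by
    by_contra hc
    rw [hvv] at hne
    unfold pv at hne
    rw [if_neg hc] at hne
    exact hne rfl
  have hvv2 : vv A lam i = WW A lam (extP q0.2) (q0.1 : ℕ) := by
    rw [hvv]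
    unfold pv
    rw [if_pos hcond]
  set mm : ℕ := (q0.1 : ℕ) with hmm
  rcases Nat.eq_zero_or_pos mm with h0 | hpos
  · -- empty path : i is critical
    have hvv0 : vv A lam i = 0 := by
      rw [hvv2, h0]
      unfold WW
      simp
    have hicrit : Crit A lam i := by
      rw [← hcond.1, h0]
      exact hcond.2
    obtain ⟨mc, hmc1, pc, hpc0, hpcm, hpcr, hpcsum⟩ := id hicrit
    set j : Fin n := pc (mc - 1) with hj
    have hAij : A i j = ((gA A i j : ℝ) : WithBot ℝ) := by
      have hedge : A (pc mc) (pc (mc-1)) ≠ ⊥ := by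
        have := hpcr (mc - 1) (by omega)
        rwa [show mc - 1 + 1 = mc by omega] at this
      rw [hpcm] at hedge
      exact (coe_unbot'_of_ne _ hedge).symm
    have hWWpc : WW A lam pc (mc - 1)
        = ((∑ t ∈ Finset.range (mc-1), gA A (pc (t+1)) (pc t) - lam * ((mc-1:ℕ):ℝ) : ℝ) : WithBot ℝ) :=
      realWW (fun t ht => hpcr t (by omega))
    have hvvj : WW A lam pc (mc - 1) ≤ vv A lam j := by
      apply WW_le_vv hlam2
      rw [hpc0]
      exact hicrit
    have hsum : gA A i j + (∑ t ∈ Finset.range (mc-1), gA A (pc (t+1)) (pc t)) = lam * mc := by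
      have h1 := Finset.sum_range_succ (fun t => gA A (pc (t+1)) (pc t)) (mc - 1)
      rw [show mc - 1 + 1 = mc by omega] at h1
      rw [hpcm] at h1
      rw [← hpcsum, h1]
      ring
    have hkey : ((lam:ℝ):WithBot ℝ) ≤ A i j + vv A lam j := by
      calc ((lam:ℝ):WithBot ℝ)
          = ((gA A i j + (∑ t ∈ Finset.range (mc-1), gA A (pc (t+1)) (pc t) - lam * ((mc-1:ℕ):ℝ)) : ℝ) : WithBot ℝ) := by
            congr 1
            have hcast : ((mc-1:ℕ):ℝ) = (mc:ℝ) - 1 := by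
              have : (1:ℕ) ≤ mc := hmc1
              push_cast [this]
              ring
            rw [hcast]
            linarith [hsum]
        _ = ((gA A i j : ℝ) : WithBot ℝ)
            + ((∑ t ∈ Finset.range (mc-1), gA A (pc (t+1)) (pc t) - lam * ((mc-1:ℕ):ℝ) : ℝ) : WithBot ℝ) := by
            rw [← WithBot.coe_add]
        _ = A i j + WW A lam pc (mc - 1) := by rw [hAij, hWWpc]
        _ ≤ A i j + vv A lam j := add_le_add_right hvvj _
    calc ((lam:ℝ):WithBot ℝ) + vv A lam i = ((lam:ℝ):WithBot ℝ) := by rw [hvv0, add_zero]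
      _ ≤ A i j + vv A lam j := hkey
      _ ≤ _ := Finset.le_sup (f := fun j => A i j + vv A lam j) (Finset.mem_univ j)
  · -- nonempty path : peel the last edge
    set j : Fin n := extP q0.2 (mm - 1) with hj
    have hWWsplit : WW A lam (extP q0.2) mm
        = WW A lam (extP q0.2) (mm - 1) + (A i j + ((-lam:ℝ):WithBot ℝ)) := by
      unfold WW
      rw [show mm = (mm - 1) + 1 by omega, Finset.sum_range_succ]
      congr 2
      rw [show mm - 1 + 1 = mm by omega, hcond.1]
    have hL1 : WW A lam (extP q0.2) (mm - 1) ≤ vv A lam j := by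
      apply WW_le_vv hlam2
      exact hcond.2
    have h2 := add_le_add_left hL1 (A i j + ((-lam:ℝ):WithBot ℝ) + ((lam:ℝ):WithBot ℝ))
    have h3 : vv A lam j + (A i j + ((-lam:ℝ):WithBot ℝ) + ((lam:ℝ):WithBot ℝ))
        = A i j + vv A lam j := by
      calc vv A lam j + (A i j + ((-lam:ℝ):WithBot ℝ) + ((lam:ℝ):WithBot ℝ))
          = A i j + (vv A lam j + (((-lam:ℝ):WithBot ℝ) + ((lam:ℝ):WithBot ℝ))) := by ac_rfl
        _ = A i j + (vv A lam j + 0) := by rw [coe_neg_add_coe]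
        _ = A i j + vv A lam j := by rw [add_zero]
    have h4 : WW A lam (extP q0.2) (mm - 1) + (A i j + ((-lam:ℝ):WithBot ℝ) + ((lam:ℝ):WithBot ℝ))
        = ((lam:ℝ):WithBot ℝ) + vv A lam i := by
      rw [hvv2, hWWsplit]
      ac_rfl
    rw [h3, h4] at h2
    calc ((lam:ℝ):WithBot ℝ) + vv A lam i ≤ A i j + vv A lam j := h2
      _ ≤ _ := Finset.le_sup (f := fun j => A i j + vv A lam j) (Finset.mem_univ j)

lemma b_to_c (hn : 1 ≤ n) (A : Matrix (Fin n) (Fin n) (WithBot ℝ)) (hA : MPRegular A)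
    (lam : ℝ) (hlam : IsMaxCycleMean A lam)
    (hb : ∀ (x0 : Fin n → ℝ) (i : Fin n),
      Tendsto (fun k : ℕ => mpOrbit A x0 k i / (k : ℝ)) atTop (nhds lam)) :
    ∃ x : Fin n → ℝ, ∀ i : Fin n,
      (Finset.univ.sup fun j => A i j + ((x j : ℝ) : WithBot ℝ)) = ((lam + x i : ℝ) : WithBot ℝ) := by
  have hcr := MPAux9.crit_reach hn A hA lam hlam hb
  have hne : ∀ i, vv A lam i ≠ ⊥ := by
    intro i
    obtain ⟨j, hcrit, hrch⟩ := hcr i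
    obtain ⟨m, p, hp0, hpm, hpr⟩ := hrch
    have h1 : WW A lam p m ≤ vv A lam i := by
      rw [← hpm]
      apply WW_le_vv hlam.2
      rw [hp0]
      exact hcrit
    rw [realWW hpr] at h1
    exact fun hbot => by
      rw [hbot] at h1
      exact absurd (le_bot_iff.mp h1) (WithBot.coe_ne_bot)
  set x : Fin n → ℝ := fun i => (vv A lam i).unbotD 0 with hx
  have hxe : ∀ i, ((x i : ℝ) : WithBot ℝ) = vv A lam i := fun i => coe_unbot'_of_ne _ (hne i)
  refine ⟨x, fun i => ?_⟩
  have h1 : (Finset.univ.sup fun j => A i j + ((x j : ℝ) : WithBot ℝ))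
      = (Finset.univ.sup fun j => A i j + vv A lam j) := by
    congr 1
    funext j
    rw [hxe j]
  rw [h1]
  have h2 : ((lam + x i : ℝ) : WithBot ℝ) = ((lam:ℝ):WithBot ℝ) + vv A lam i := by
    rw [WithBot.coe_add, hxe i]
  rw [h2]
  exact le_antisymm (L2 hlam.2 i) (L3 hlam.2 i (hne i))

end MPAux11

end AuxProofs

/-- Equivalent characterizations of periodicity of a regular max-plus linear
system with maximum cycle mean `λ = λ(A)`: (a) every orbit is eventually
periodic with rate `λ`; (b) every orbit has cycle-time vector `(λ, …, λ)`;
(c) `A` admits a finite eigenvector for the eigenvalue `λ`. -/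
theorem periodic_tfae {n : ℕ} (hn : 1 ≤ n)
    (A : Matrix (Fin n) (Fin n) (WithBot ℝ)) (hA : MPRegular A)
    (lam : ℝ) (hlam : IsMaxCycleMean A lam) :
    ((∀ x0 : Fin n → ℝ, ∃ l c : ℕ, 1 ≤ c ∧ ∀ j : ℕ, l ≤ j → ∀ i : Fin n,
        mpOrbit A x0 (j + c) i = lam * (c : ℝ) + mpOrbit A x0 j i) ↔
      (∀ (x0 : Fin n → ℝ) (i : Fin n),
        Filter.Tendsto (fun k : ℕ => mpOrbit A x0 k i / (k : ℝ))
          Filter.atTop (nhds lam))) ∧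
    ((∀ x0 : Fin n → ℝ, ∃ l c : ℕ, 1 ≤ c ∧ ∀ j : ℕ, l ≤ j → ∀ i : Fin n,
        mpOrbit A x0 (j + c) i = lam * (c : ℝ) + mpOrbit A x0 j i) ↔
      (∃ x : Fin n → ℝ, ∀ i : Fin n,
        (Finset.univ.sup fun j => A i j + ((x j : ℝ) : WithBot ℝ)) =
          ((lam + x i : ℝ) : WithBot ℝ))) := by
  constructor
  · constructor
    · intro ha x0 i
      obtain ⟨l, c, hc, hper⟩ := ha (fun _ => 0)
      obtain ⟨v, hv⟩ := MPAux4.a_to_c A hn hA lam (fun _ => 0) l c hc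
        (fun i => hper l (le_refl l) i)
      exact MPAux3.c_to_b A hn hA lam v hv x0 i
    · intro hb x0
      obtain ⟨v, hv⟩ := MPAux11.b_to_c hn A hA lam hlam hb
      exact MPAux6.c_to_a hn A hA lam v hv x0
  · constructor
    · intro ha
      obtain ⟨l, c, hc, hper⟩ := ha (fun _ => 0)
      exact MPAux4.a_to_c A hn hA lam (fun _ => 0) l c hc (fun i => hper l (le_refl l) i)
    · intro hcc x0
      obtain ⟨v, hv⟩ := hcc
      exact MPAux6.c_to_a hn A hA lam v hv x0
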